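/- There exist no elements A, B, D ∈ PSL₂(ℂ) satisfying AB = BA, D·A·D⁻¹ = B and D·B·D⁻¹ = (AB)⁻¹ such that the subgroup of PSL₂(ℂ) generated by A, B and D is dihedral and non-abelian. (This is the key step showing that the solvable group G(t³−1) ≅ ℤ³ ⋊ ℤ admits no representation into PSL₂(ℂ) with irreducible infinite image.) -/

import Mathlib

/-- `SL₂(ℂ)`: the group of 2×2 complex matrices of determinant 1. -/
abbrev SL2 : Type := Matrix.SpecialLinearGroup (Fin 2) ℂ

/-- `PSL₂(ℂ)`: the quotient of `SL₂(ℂ)` by its center `{±I}`. -/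
abbrev PSL2 : Type := SL2 ⧸ Subgroup.center SL2

/-- A matrix in `SL₂(ℂ)` is diagonal of the form `[[λ,0],[0,λ⁻¹]]` or
anti-diagonal of the form `[[0,μ],[-μ⁻¹,0]]`. -/
def IsDiagOrAnti (M : SL2) : Prop :=
  (∃ l : ℂ, l ≠ 0 ∧ (M : Matrix (Fin 2) (Fin 2) ℂ) = !![l, 0; 0, l⁻¹]) ∨
  (∃ m : ℂ, m ≠ 0 ∧ (M : Matrix (Fin 2) (Fin 2) ℂ) = !![0, m; -m⁻¹, 0])

/-- A subgroup `H` of `PSL₂(ℂ)` is dihedral if some conjugate of `H` is contained in the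
image in `PSL₂(ℂ)` of the set of diagonal and anti-diagonal matrices in `SL₂(ℂ)`. -/
def IsDihedral (H : Subgroup PSL2) : Prop :=
  ∃ g : PSL2, ∀ h ∈ H, ∃ M : SL2, IsDiagOrAnti M ∧
    g * h * g⁻¹ = (QuotientGroup.mk M : PSL2)


/-!
After conjugation, `A`, `B` and `D` are images of monomial matrices, i.e. diagonal or
antidiagonal ones. Since `±1` is diagonal, the sign "diagonal ↦ 1, antidiagonal ↦ -1" descends to
a homomorphism from the image of the monomial group in `PSL₂(ℂ)` to `ℤˣ`. In any abelian quotient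
the relations give `B = A` and `A * B² = 1`, so the sign of `A` is a cube root of `1`, and `A` is
diagonal. If `D` is diagonal as well, everything commutes. If `D` is antidiagonal, it inverts `A`,
so `B = A⁻¹`, `A * B = 1` and hence `A = B = 1`.
-/

theorem MonoidHom.map_pow_three_eq_one_of_conj_eq {G H : Type*} [Group G] [CommGroup H] (f : G →* H)
    {a b d : G} (hab : d * a * d⁻¹ = b) (hb : d * b * d⁻¹ = (a * b)⁻¹) :
    f a ^ 3 = 1 := by
  have hfb : f b = f a := by rw [← hab, map_mul, map_mul, map_inv, mul_inv_cancel_comm]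
  have hfa := congrArg f hb
  rw [map_mul, map_mul, map_inv, mul_inv_cancel_comm, map_inv, map_mul, hfb] at hfa
  rwa [pow_three, mul_eq_one_iff_eq_inv]

theorem eq_one_of_conj_eq_inv {G : Type*} [Group G] {a b d : G} (hab : d * a * d⁻¹ = b)
    (hb : d * b * d⁻¹ = (a * b)⁻¹) (hinv : d * a * d⁻¹ = a⁻¹) : a = 1 := by
  obtain rfl : b = a⁻¹ := hab.symm.trans hinv
  calc a = (d * a * d⁻¹)⁻¹ := by rw [hinv, inv_inv]
    _ = d * a⁻¹ * d⁻¹ := by group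
    _ = 1 := by rw [hb, mul_inv_cancel, inv_one]

theorem Int.units_eq_one_of_pow_three_eq_one {u : ℤˣ} (h : u ^ 3 = 1) : u = 1 := by
  rwa [pow_three, Int.units_mul_self, mul_one] at h

namespace SL2

def diag (u : ℂˣ) : SL2 := ⟨!![(u : ℂ), 0; 0, ↑u⁻¹], by simp⟩

def antidiag (u : ℂˣ) : SL2 := ⟨!![0, (u : ℂ); -↑u⁻¹, 0], by simp⟩

@[simp] lemma diag_one : diag 1 = 1 :=
  Subtype.ext <| by simp [diag, Matrix.one_fin_two]

lemma diag_mul_diag (u v : ℂˣ) : diag u * diag v = diag (u * v) :=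
  Subtype.ext <| by rw [Matrix.SpecialLinearGroup.coe_mul]; simp [diag, mul_comm]

lemma diag_mul_antidiag (u v : ℂˣ) : diag u * antidiag v = antidiag (u * v) :=
  Subtype.ext <| by rw [Matrix.SpecialLinearGroup.coe_mul]; simp [diag, antidiag, mul_comm]

lemma antidiag_mul_diag (u v : ℂˣ) : antidiag u * diag v = antidiag (u * v⁻¹) :=
  Subtype.ext <| by rw [Matrix.SpecialLinearGroup.coe_mul]; simp [diag, antidiag, mul_comm]

lemma antidiag_mul_antidiag (u v : ℂˣ) : antidiag u * antidiag v = diag (-(u * v⁻¹)) :=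
  Subtype.ext <| by rw [Matrix.SpecialLinearGroup.coe_mul]; simp [diag, antidiag, mul_comm]

lemma diag_inv (u : ℂˣ) : (diag u)⁻¹ = diag u⁻¹ :=
  inv_eq_of_mul_eq_one_right <| by rw [diag_mul_diag, mul_inv_cancel, diag_one]

lemma antidiag_inv (u : ℂˣ) : (antidiag u)⁻¹ = antidiag (-u) :=
  inv_eq_of_mul_eq_one_right <| by rw [antidiag_mul_antidiag]; simp

lemma commute_diag (u v : ℂˣ) : Commute (diag u) (diag v) := by
  rw [Commute, SemiconjBy, diag_mul_diag, diag_mul_diag, mul_comm]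

lemma antidiag_conj_diag (u v : ℂˣ) : antidiag v * diag u * (antidiag v)⁻¹ = diag u⁻¹ := by
  rw [antidiag_inv, antidiag_mul_diag, antidiag_mul_antidiag]; simp

lemma antidiag_notMem_center (u : ℂˣ) : antidiag u ∉ Subgroup.center SL2 := by
  intro h
  obtain ⟨r, -, hr⟩ := Matrix.SpecialLinearGroup.mem_center_iff.mp h
  have h01 := congrFun (congrFun hr 0) 1
  exact u.ne_zero (by simpa [antidiag] using h01.symm)

def monomial : Subgroup SL2 where
  carrier := {M | ∃ u, M = diag u ∨ M = antidiag u}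
  one_mem' := ⟨1, .inl diag_one.symm⟩
  mul_mem' := by
    rintro _ _ ⟨u, rfl | rfl⟩ ⟨v, rfl | rfl⟩
    · exact ⟨_, .inl (diag_mul_diag u v)⟩
    · exact ⟨_, .inr (diag_mul_antidiag u v)⟩
    · exact ⟨_, .inr (antidiag_mul_diag u v)⟩
    · exact ⟨_, .inl (antidiag_mul_antidiag u v)⟩
  inv_mem' := by
    rintro _ ⟨u, rfl | rfl⟩
    · exact ⟨_, .inl (diag_inv u)⟩
    · exact ⟨_, .inr (antidiag_inv u)⟩

lemma diag_mem_monomial (u : ℂˣ) : diag u ∈ monomial := ⟨u, .inl rfl⟩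

lemma antidiag_mem_monomial (u : ℂˣ) : antidiag u ∈ monomial := ⟨u, .inr rfl⟩

theorem _root_.IsDiagOrAnti.mem_monomial {M : SL2} (hM : IsDiagOrAnti M) : M ∈ monomial := by
  rcases hM with ⟨l, hl, hM⟩ | ⟨m, hm, hM⟩
  · exact ⟨Units.mk0 l hl, .inl <| Subtype.ext <| by simp [hM, diag]⟩
  · exact ⟨Units.mk0 m hm, .inr <| Subtype.ext <| by simp [hM, antidiag]⟩

noncomputable def monomialSign : monomial →* ℤˣ where
  toFun M := if ((M : SL2) : Matrix (Fin 2) (Fin 2) ℂ) 0 0 = 0 then -1 else 1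
  map_one' := by simp
  map_mul' := by
    rintro ⟨_, u, rfl | rfl⟩ ⟨_, v, rfl | rfl⟩ <;>
      simp only [Subgroup.coe_mul, diag_mul_diag, diag_mul_antidiag, antidiag_mul_diag,
        antidiag_mul_antidiag] <;> simp [diag, antidiag]

@[simp] lemma monomialSign_diag (u : ℂˣ) : monomialSign ⟨diag u, diag_mem_monomial u⟩ = 1 := by
  simp [monomialSign, diag]

@[simp] lemma monomialSign_antidiag (u : ℂˣ) :
    monomialSign ⟨antidiag u, antidiag_mem_monomial u⟩ = -1 := by
  simp [monomialSign, antidiag]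

lemma center_subgroupOf_le_ker_monomialSign :
    (Subgroup.center SL2).subgroupOf monomial ≤ monomialSign.ker := by
  rintro ⟨_, u, rfl | rfl⟩ h
  · simp
  · exact absurd h (antidiag_notMem_center u)

end SL2

namespace PSL2

open SL2 (diag antidiag)

abbrev monomial : Subgroup PSL2 := SL2.monomial.map (QuotientGroup.mk' (Subgroup.center SL2))

noncomputable def monomialSign : monomial →* ℤˣ :=
  ((QuotientGroup.mk' _).subgroupMap SL2.monomial).liftOfSurjective
    (MonoidHom.subgroupMap_surjective _ _)
    ⟨SL2.monomialSign, by
      rw [Subgroup.ker_subgroupMap, QuotientGroup.ker_mk']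
      exact SL2.center_subgroupOf_le_ker_monomialSign⟩

lemma monomialSign_subgroupMap (M : SL2.monomial) :
    monomialSign ((QuotientGroup.mk' _).subgroupMap SL2.monomial M) = SL2.monomialSign M :=
  MonoidHom.liftOfRightInverse_comp_apply _ _ _ _ M

lemma exists_eq_mk_diag_of_monomialSign_eq_one (x : monomial) (hx : monomialSign x = 1) :
    ∃ u, (x : PSL2) = QuotientGroup.mk (diag u) := by
  obtain ⟨M, rfl⟩ := MonoidHom.subgroupMap_surjective _ _ x
  rw [monomialSign_subgroupMap] at hx
  obtain ⟨_, u, rfl | rfl⟩ := M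
  · exact ⟨u, rfl⟩
  · simp at hx

lemma exists_eq_mk_of_mem_monomial {x : PSL2} (hx : x ∈ monomial) :
    ∃ u, x = QuotientGroup.mk (diag u) ∨ x = QuotientGroup.mk (antidiag u) := by
  obtain ⟨_, ⟨u, rfl | rfl⟩, rfl⟩ := hx
  exacts [⟨u, .inl rfl⟩, ⟨u, .inr rfl⟩]

theorem eq_and_commute_of_conj_eq {A B D : PSL2} (hA : A ∈ monomial) (hD : D ∈ monomial)
    (hAB : D * A * D⁻¹ = B) (hB : D * B * D⁻¹ = (A * B)⁻¹) : B = A ∧ Commute A D := by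
  have hBmem : B ∈ monomial := hAB ▸ mul_mem (mul_mem hD hA) (inv_mem hD)
  have hsign : monomialSign ⟨A, hA⟩ = 1 := Int.units_eq_one_of_pow_three_eq_one <|
    monomialSign.map_pow_three_eq_one_of_conj_eq (a := ⟨A, hA⟩) (b := ⟨B, hBmem⟩) (d := ⟨D, hD⟩)
      (Subtype.ext hAB) (Subtype.ext hB)
  obtain ⟨u, hu : A = _⟩ := exists_eq_mk_diag_of_monomialSign_eq_one _ hsign
  obtain ⟨v, rfl | rfl⟩ := exists_eq_mk_of_mem_monomial hD
  · have hAD : Commute A (QuotientGroup.mk (diag v)) := by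
      rw [hu]; exact (SL2.commute_diag u v).map (QuotientGroup.mk' _)
    exact ⟨hAB.symm.trans hAD.symm.mul_inv_cancel, hAD⟩
  · have hinv : QuotientGroup.mk (antidiag v) * A * (QuotientGroup.mk (antidiag v))⁻¹ = A⁻¹ := by
      rw [hu, ← QuotientGroup.mk_inv, ← QuotientGroup.mk_mul, ← QuotientGroup.mk_mul,
        SL2.antidiag_conj_diag, ← SL2.diag_inv, QuotientGroup.mk_inv]
    have hA1 : A = 1 := eq_one_of_conj_eq_inv hAB hB hinv
    exact ⟨by rw [← hAB, hinv, hA1, inv_one], hA1 ▸ Commute.one_left _⟩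

end PSL2

/-- There are no `A, B, D ∈ PSL₂(ℂ)` with `AB = BA`, `DAD⁻¹ = B`, `DBD⁻¹ = (AB)⁻¹`
generating a non-abelian dihedral subgroup: the key step showing that `G(t³−1) ≅ ℤ³ ⋊ ℤ`
has no representation into `PSL₂(ℂ)` with irreducible infinite image. -/
theorem Gt3_no_nonabelian_dihedral :
    ¬ ∃ A B D : PSL2, A * B = B * A ∧ D * A * D⁻¹ = B ∧ D * B * D⁻¹ = (A * B)⁻¹ ∧
      IsDihedral (Subgroup.closure {A, B, D}) ∧
      ¬ (∀ x ∈ Subgroup.closure {A, B, D}, ∀ y ∈ Subgroup.closure {A, B, D},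
          x * y = y * x) := by
  rintro ⟨A, B, D, -, hAB, hB, ⟨g, hg⟩, hnc⟩
  have hmem : ∀ x ∈ Subgroup.closure {A, B, D}, MulAut.conj g x ∈ PSL2.monomial := fun x hx ↦
    let ⟨M, hM, hgM⟩ := hg x hx
    ⟨M, hM.mem_monomial, hgM.symm⟩
  obtain ⟨hBA, hAD⟩ := PSL2.eq_and_commute_of_conj_eq (B := MulAut.conj g B)
    (hmem A (Subgroup.subset_closure (by simp))) (hmem D (Subgroup.subset_closure (by simp)))
    (by simpa only [map_mul, map_inv] using congrArg (MulAut.conj g) hAB)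
    (by simpa only [map_mul, map_inv] using congrArg (MulAut.conj g) hB)
  obtain rfl : A = B := ((MulAut.conj g).injective hBA).symm
  replace hAD := hAD.of_map (MulAut.conj g).injective
  have hgen : ∀ x ∈ ({A, A, D} : Set PSL2), ∀ y ∈ ({A, A, D} : Set PSL2), x * y = y * x := by
    rintro x (rfl | rfl | rfl) y (rfl | rfl | rfl) <;>
      first | rfl | exact hAD.eq | exact hAD.eq.symm
  exact hnc fun x hx y hy ↦ Set.centralizer_centralizer_comm_of_comm hgen
    x (Subgroup.closure_le_centralizer_centralizer _ hx)
    y (Subgroup.closure_le_centralizer_centralizer _ hy)
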